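/- Let n ≥ 1, ν > 0, T > 0, and let u : [0,T] × ℝⁿ → ℝⁿ be a bounded classical solution of the multivariate Burgers system, i.e. each component u_i is continuous and bounded, has a continuous bounded first time derivative and continuous bounded spatial derivatives up to second order, and ∂u_i/∂t = νΔu_i − Σ_{j=1}^n u_j ∂u_i/∂x_j holds pointwise with u(0,·) = h. Then max_{1≤j≤n} sup_{(t,x)∈[0,T]×ℝⁿ} |u_j(t,x)| ≤ max_{1≤j≤n} sup_{x∈ℝⁿ} |h_j(x)|. -/

import Mathlib

/-!
Each component `v = uᵢ` solves the linear equation `v_t = νΔv − b·∇v` with the bounded drift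
`b = u`, so it suffices to prove the weak maximum principle for bounded subsolutions of such
equations and apply it to `uᵢ` and `−uᵢ`. On the unbounded strip `[0,T] × ℝⁿ` one compares `v`
with the barrier `ε (1 + ‖x‖²) e^{λt}`: `v` minus the barrier attains its maximum, and for
`λ = 2nν + nC² + 1` (dominating the diffusion and drift terms the barrier generates, `C` bounding
`v` and `b`) this maximum cannot occur at a positive time, since there the first and second
derivative tests in `x` and the one-sided test in `t` contradict the equation. Hence
`v ≤ sup v(0,·) + ε (1 + ‖x‖²) e^{λt}` for every `ε > 0`.
-/

open MeasureTheory Set Filter Topology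

noncomputable section

/-- Spatial partial derivative in coordinate direction `j`. -/
noncomputable def pd {n : ℕ} (j : Fin n) (f : EuclideanSpace ℝ (Fin n) → ℝ)
    (x : EuclideanSpace ℝ (Fin n)) : ℝ :=
  fderiv ℝ f x (EuclideanSpace.single j 1)

theorem IsLocalMax.deriv_deriv_nonpos {g : ℝ → ℝ} {a : ℝ} (hmax : IsLocalMax g a)
    (hc : ContinuousAt g a) : deriv (deriv g) a ≤ 0 := by
  by_contra! hpos
  have hmin : IsLocalMin g a := isLocalMin_of_deriv_deriv_pos hpos hmax.deriv_eq_zero hc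
  have hconst : g =ᶠ[𝓝 a] fun _ => g a :=
    (hmin.and hmax).mono fun _ hy => le_antisymm hy.2 hy.1
  have := hconst.deriv.deriv_eq
  simp only [deriv_const', deriv_const] at this
  exact hpos.ne' this

theorem IsMaxOn.hasDerivWithinAt_Icc_nonneg {g : ℝ → ℝ} {a b t D : ℝ}
    (hmax : IsMaxOn g (Icc a b) t) (ht : t ∈ Ioc a b) (hd : HasDerivWithinAt g D (Icc a b) t) :
    0 ≤ D := by
  have hseg : segment ℝ t (t + (a - t)) ⊆ Icc a b := by
    rw [add_sub_cancel]
    exact (convex_Icc a b).segment_subset (Ioc_subset_Icc_self ht)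
      (left_mem_Icc.2 (ht.1.le.trans ht.2))
  have := hmax.localize.hasFDerivWithinAt_nonpos hd.hasFDerivWithinAt
    (mem_posTangentConeAt_of_segment_subset hseg)
  simp only [ContinuousLinearMap.toSpanSingleton_apply, smul_eq_mul] at this
  nlinarith [ht.1]

section PartialDerivative

variable {n : ℕ} {f g : EuclideanSpace ℝ (Fin n) → ℝ} {x : EuclideanSpace ℝ (Fin n)}

theorem pd_fun_neg (j : Fin n) :
    pd j (fun y => -f y) = fun x => -pd j f x := by
  ext x
  simp [pd, fderiv_fun_neg]

theorem ContDiff.differentiable_pd (hf : ContDiff ℝ 2 f) (j : Fin n) :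
    Differentiable ℝ (pd j f) := fun x =>
  ((hf.fderiv_right (m := 1) (by norm_num)).differentiable one_ne_zero x).clm_apply
    (differentiableAt_const _)

theorem hasDerivAt_comp_add_smul_single (j : Fin n) (s : ℝ)
    (hf : DifferentiableAt ℝ f (x + s • EuclideanSpace.single j 1)) :
    HasDerivAt (fun s : ℝ => f (x + s • EuclideanSpace.single j 1))
      (pd j f (x + s • EuclideanSpace.single j 1)) s := by
  have hline : HasDerivAt (fun s : ℝ => x + s • EuclideanSpace.single j (1 : ℝ))
      (EuclideanSpace.single j 1) s := by
    simpa using ((hasDerivAt_id s).smul_const (EuclideanSpace.single j (1 : ℝ))).const_add x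
  exact hf.hasFDerivAt.comp_hasDerivAt s hline

theorem IsLocalMax.pd_eq_of_sub (hmax : IsLocalMax (f - g) x) (hf : DifferentiableAt ℝ f x)
    (hg : DifferentiableAt ℝ g x) (j : Fin n) : pd j f x = pd j g x := by
  have h := hmax.fderiv_eq_zero
  rw [fderiv_sub hf hg, sub_eq_zero] at h
  simp [pd, h]

theorem IsLocalMax.pd_pd_le_of_sub (hmax : IsLocalMax (f - g) x) (hf : ContDiff ℝ 2 f)
    (hg : ContDiff ℝ 2 g) (j : Fin n) : pd j (pd j f) x ≤ pd j (pd j g) x := by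
  set L : ℝ → EuclideanSpace ℝ (Fin n) := fun s => x + s • EuclideanSpace.single j 1
  have hL : Continuous L := by fun_prop
  have hderiv : deriv ((f - g) ∘ L) = fun s => pd j f (L s) - pd j g (L s) := funext fun s =>
    ((hasDerivAt_comp_add_smul_single j s (hf.differentiable two_ne_zero _)).sub
      (hasDerivAt_comp_add_smul_single j s (hg.differentiable two_ne_zero _))).deriv
  have hderiv2 : HasDerivAt (fun s => pd j f (L s) - pd j g (L s))
      (pd j (pd j f) x - pd j (pd j g) x) 0 := by
    simpa [L] using (hasDerivAt_comp_add_smul_single j 0 (hf.differentiable_pd j _)).fun_sub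
      (hasDerivAt_comp_add_smul_single j 0 (hg.differentiable_pd j _))
  have hmaxL : IsLocalMax ((f - g) ∘ L) 0 :=
    IsLocalMax.comp_continuous (by simpa [L] using hmax) hL.continuousAt
  have := hmaxL.deriv_deriv_nonpos (((hf.continuous.sub hg.continuous).comp hL).continuousAt)
  rw [hderiv, hderiv2.deriv] at this
  linarith

end PartialDerivative

section Barrier

variable {n : ℕ}

def parabolicBarrier (ε lam t : ℝ) (x : EuclideanSpace ℝ (Fin n)) : ℝ :=
  ε * (1 + ‖x‖ ^ 2) * Real.exp (lam * t)

variable (ε lam t : ℝ)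

theorem contDiff_parabolicBarrier : ContDiff ℝ 2 (parabolicBarrier (n := n) ε lam t) := by
  unfold parabolicBarrier
  have := contDiff_norm_sq ℝ (E := EuclideanSpace ℝ (Fin n)) (n := 2)
  fun_prop

theorem pd_parabolicBarrier_eq (j : Fin n) :
    pd j (parabolicBarrier ε lam t) = fun x => 2 * (ε * Real.exp (lam * t)) * x j := by
  ext x
  have h := (((hasStrictFDerivAt_norm_sq x).hasFDerivAt.const_add 1).const_mul ε).mul_const
    (Real.exp (lam * t))
  unfold pd parabolicBarrier
  simp only [h.fderiv, ContinuousLinearMap.smul_apply, coe_innerSL_apply,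
    EuclideanSpace.inner_single_right, Real.ringHom_apply, one_mul, nsmul_eq_mul, Nat.cast_ofNat,
    smul_eq_mul]
  ring

theorem pd_pd_parabolicBarrier (j : Fin n) (x : EuclideanSpace ℝ (Fin n)) :
    pd j (pd j (parabolicBarrier ε lam t)) x = 2 * (ε * Real.exp (lam * t)) := by
  have h : HasFDerivAt (fun x : EuclideanSpace ℝ (Fin n) => 2 * (ε * Real.exp (lam * t)) * x j)
      ((2 * (ε * Real.exp (lam * t))) • EuclideanSpace.proj (𝕜 := ℝ) j) x :=
    (EuclideanSpace.proj (𝕜 := ℝ) (ι := Fin n) j).hasFDerivAt.const_mul _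
  rw [pd_parabolicBarrier_eq, pd, h.fderiv]
  simp

theorem hasDerivAt_parabolicBarrier_time (x : EuclideanSpace ℝ (Fin n)) :
    HasDerivAt (fun t => parabolicBarrier ε lam t x) (lam * parabolicBarrier ε lam t x) t :=
  (((hasDerivAt_id t).const_mul lam).exp.const_mul (ε * (1 + ‖x‖ ^ 2))).congr_deriv
    (by simp [parabolicBarrier]; ring)

theorem mul_one_add_norm_sq_le_parabolicBarrier {ε lam t : ℝ} (hε : 0 ≤ ε) (hlam : 0 ≤ lam)
    (ht : 0 ≤ t) (x : EuclideanSpace ℝ (Fin n)) :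
    ε * (1 + ‖x‖ ^ 2) ≤ parabolicBarrier ε lam t x :=
  le_mul_of_one_le_right (by positivity) (Real.one_le_exp (by positivity))

end Barrier

theorem neg_sum_mul_two_mul_le {n : ℕ} {b : Fin n → ℝ} {C : ℝ} (hb : ∀ j, |b j| ≤ C)
    (x : EuclideanSpace ℝ (Fin n)) : -∑ j, b j * (2 * x j) ≤ n * C ^ 2 + ‖x‖ ^ 2 := by
  have hterm : ∀ j, -(b j * (2 * x j)) ≤ C ^ 2 + x j ^ 2 := fun j => by
    have hbC : b j ^ 2 ≤ C ^ 2 := sq_le_sq' (abs_le.1 (hb j)).1 (abs_le.1 (hb j)).2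
    nlinarith [sq_nonneg (b j + x j)]
  calc -∑ j, b j * (2 * x j) = ∑ j, -(b j * (2 * x j)) := by rw [Finset.sum_neg_distrib]
    _ ≤ ∑ j, (C ^ 2 + x j ^ 2) := Finset.sum_le_sum fun j _ => hterm j
    _ = n * C ^ 2 + ‖x‖ ^ 2 := by simp [Finset.sum_add_distrib, EuclideanSpace.real_norm_sq_eq]

theorem IsLocalMax.diffusion_sub_drift_le_of_sub_parabolicBarrier {n : ℕ}
    {f : EuclideanSpace ℝ (Fin n) → ℝ} {x : EuclideanSpace ℝ (Fin n)} {b : Fin n → ℝ}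
    {ν C ε lam t : ℝ} (hmax : IsLocalMax (f - parabolicBarrier ε lam t) x)
    (hf : ContDiff ℝ 2 f) (hε : 0 ≤ ε) (hν : 0 ≤ ν) (hb : ∀ j, |b j| ≤ C) :
    ν * ∑ j, pd j (pd j f) x - ∑ j, b j * pd j f x
      ≤ ε * Real.exp (lam * t) * (2 * n * ν + n * C ^ 2 + ‖x‖ ^ 2) := by
  set c := ε * Real.exp (lam * t)
  have hc : 0 ≤ c := by positivity
  have hgrad : ∀ j, pd j f x = 2 * c * x j := fun j => by
    rw [hmax.pd_eq_of_sub (hf.differentiable two_ne_zero _)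
      ((contDiff_parabolicBarrier ε lam t).differentiable two_ne_zero _), pd_parabolicBarrier_eq]
  have hlap : ∀ j, pd j (pd j f) x ≤ 2 * c := fun j =>
    (hmax.pd_pd_le_of_sub hf (contDiff_parabolicBarrier ε lam t) j).trans_eq
      (pd_pd_parabolicBarrier ε lam t j x)
  have hdiffusion : ∑ j, pd j (pd j f) x ≤ n * (2 * c) := by
    simpa using Finset.sum_le_sum fun j (_ : j ∈ Finset.univ) => hlap j
  have hdrift : ∑ j, b j * pd j f x = c * ∑ j, b j * (2 * x j) := by
    rw [Finset.mul_sum]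
    exact Finset.sum_congr rfl fun j _ => by rw [hgrad]; ring
  rw [hdrift]
  linarith [mul_le_mul_of_nonneg_left hdiffusion hν,
    mul_le_mul_of_nonneg_left (neg_sum_mul_two_mul_le hb x) hc]

theorem exists_isMaxOn_sub_parabolicBarrier {n : ℕ} {v : ℝ → EuclideanSpace ℝ (Fin n) → ℝ}
    {T C ε lam : ℝ}
    (hco : ContinuousOn (fun p : ℝ × EuclideanSpace ℝ (Fin n) => v p.1 p.2) (Icc 0 T ×ˢ univ))
    (hvb : ∀ t ∈ Icc (0 : ℝ) T, ∀ x, |v t x| ≤ C) (hT : 0 ≤ T) (hε : 0 < ε) (hlam : 0 ≤ lam) :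
    ∃ p ∈ Icc 0 T ×ˢ univ, IsMaxOn
      (fun p : ℝ × EuclideanSpace ℝ (Fin n) => v p.1 p.2 - parabolicBarrier ε lam p.1 p.2)
      (Icc 0 T ×ˢ univ) p := by
  have h00 : ((0 : ℝ), (0 : EuclideanSpace ℝ (Fin n))) ∈ Icc 0 T ×ˢ univ :=
    ⟨left_mem_Icc.2 hT, mem_univ _⟩
  have hcont : ContinuousOn
      (fun p : ℝ × EuclideanSpace ℝ (Fin n) => v p.1 p.2 - parabolicBarrier ε lam p.1 p.2)
      (Icc 0 T ×ˢ univ) :=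
    hco.sub (by unfold parabolicBarrier; fun_prop : Continuous _).continuousOn
  refine hcont.exists_isMaxOn' (isClosed_Icc.prod isClosed_univ) h00 ?_
  -- beyond the radius `R` the barrier exceeds `2 C`, the oscillation of `v`
  set R := √(2 * C / ε)
  have hK : IsCompact (Icc 0 T ×ˢ Metric.closedBall (0 : EuclideanSpace ℝ (Fin n)) R) :=
    isCompact_Icc.prod (isCompact_closedBall 0 R)
  filter_upwards [inter_mem_inf hK.compl_mem_cocompact (mem_principal_self _)]
    with ⟨t, x⟩ ⟨hfar, ht, _⟩
  have hR : R < ‖x‖ := by simpa [ht] using hfar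
  have hx : 2 * C < ε * ‖x‖ ^ 2 := by
    rw [← div_lt_iff₀' hε]
    exact (Real.sqrt_lt' ((Real.sqrt_nonneg _).trans_lt hR)).1 hR
  have hB := mul_one_add_norm_sq_le_parabolicBarrier hε.le hlam ht.1 x
  have hB0 : parabolicBarrier ε lam 0 (0 : EuclideanSpace ℝ (Fin n)) = ε := by
    simp [parabolicBarrier]
  have hvx := abs_le.1 (hvb t ht x)
  have hv0 := abs_le.1 (hvb 0 (left_mem_Icc.2 hT) 0)
  simp only [hB0]
  linarith [mul_add ε 1 (‖x‖ ^ 2)]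

structure IsBoundedSubsolution {n : ℕ} (ν T C : ℝ) (b : ℝ → EuclideanSpace ℝ (Fin n) → Fin n → ℝ)
    (v vt : ℝ → EuclideanSpace ℝ (Fin n) → ℝ) : Prop where
  continuousOn : ContinuousOn (fun p : ℝ × EuclideanSpace ℝ (Fin n) => v p.1 p.2) (Icc 0 T ×ˢ univ)
  hasDerivWithinAt : ∀ x, ∀ t ∈ Icc (0 : ℝ) T,
    HasDerivWithinAt (fun s => v s x) (vt t x) (Icc 0 T) t
  contDiff : ∀ t ∈ Icc (0 : ℝ) T, ContDiff ℝ 2 (v t)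
  bounded : ∀ t ∈ Icc (0 : ℝ) T, ∀ x, |v t x| ≤ C
  drift_bounded : ∀ t ∈ Icc (0 : ℝ) T, ∀ x j, |b t x j| ≤ C
  time_deriv_le : ∀ t ∈ Icc (0 : ℝ) T, ∀ x,
    vt t x ≤ ν * ∑ j, pd j (pd j (v t)) x - ∑ j, b t x j * pd j (v t) x

namespace IsBoundedSubsolution

variable {n : ℕ} {ν T C : ℝ} {b : ℝ → EuclideanSpace ℝ (Fin n) → Fin n → ℝ}
  {v vt : ℝ → EuclideanSpace ℝ (Fin n) → ℝ}

theorem eq_zero_of_isMaxOn_sub_parabolicBarrier (hv : IsBoundedSubsolution ν T C b v vt)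
    (hν : 0 ≤ ν) {ε lam : ℝ} (hε : 0 < ε) (hlam : 2 * n * ν + n * C ^ 2 + 1 ≤ lam)
    {t₀ : ℝ} {x₀ : EuclideanSpace ℝ (Fin n)} (ht₀ : t₀ ∈ Icc 0 T)
    (hmax : IsMaxOn
      (fun p : ℝ × EuclideanSpace ℝ (Fin n) => v p.1 p.2 - parabolicBarrier ε lam p.1 p.2)
      (Icc 0 T ×ˢ univ) (t₀, x₀)) :
    t₀ = 0 := by
  by_contra hne
  have ht₀' : t₀ ∈ Ioc 0 T := ⟨lt_of_le_of_ne ht₀.1 (Ne.symm hne), ht₀.2⟩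
  set c := ε * Real.exp (lam * t₀)
  have hspace : IsLocalMax (v t₀ - parabolicBarrier ε lam t₀) x₀ :=
    IsMaxOn.isLocalMax (s := univ) (fun y _ => hmax (a := (t₀, y)) ⟨ht₀, mem_univ y⟩) univ_mem
  have hrhs := hspace.diffusion_sub_drift_le_of_sub_parabolicBarrier (hv.contDiff t₀ ht₀) hε.le
    hν (hv.drift_bounded t₀ ht₀ x₀)
  have htime : lam * parabolicBarrier ε lam t₀ x₀ ≤ vt t₀ x₀ := by
    have := IsMaxOn.hasDerivWithinAt_Icc_nonneg
      (g := fun s => v s x₀ - parabolicBarrier ε lam s x₀)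
      (fun s hs => hmax (a := (s, x₀)) ⟨hs, mem_univ x₀⟩) ht₀'
      ((hv.hasDerivWithinAt x₀ t₀ ht₀).sub
        (hasDerivAt_parabolicBarrier_time ε lam t₀ x₀).hasDerivWithinAt)
    linarith
  have hB : parabolicBarrier ε lam t₀ x₀ = c * (1 + ‖x₀‖ ^ 2) := by
    simp only [parabolicBarrier, c]; ring
  have hrate : (2 * n * ν + n * C ^ 2 + 1) * (c * (1 + ‖x₀‖ ^ 2)) ≤ lam * (c * (1 + ‖x₀‖ ^ 2)) :=
    mul_le_mul_of_nonneg_right hlam (by positivity)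
  have hA : 0 ≤ (2 * n * ν + n * C ^ 2) * (c * ‖x₀‖ ^ 2) := by positivity
  have hc : 0 < c := by positivity
  rw [hB] at htime
  linarith [hv.time_deriv_le t₀ ht₀ x₀]

theorem le_of_initial_le (hv : IsBoundedSubsolution ν T C b v vt) (hν : 0 ≤ ν) {M : ℝ}
    (h0 : ∀ x, v 0 x ≤ M) : ∀ t ∈ Icc (0 : ℝ) T, ∀ x, v t x ≤ M := by
  intro t ht x
  set lam : ℝ := 2 * n * ν + n * C ^ 2 + 1
  have hlam : 0 ≤ lam := by positivity
  have hbarrier : ∀ ε > 0, v t x ≤ M + parabolicBarrier ε lam t x := by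
    intro ε hε
    obtain ⟨⟨t₀, x₀⟩, ⟨ht₀, -⟩, hmax⟩ := exists_isMaxOn_sub_parabolicBarrier hv.continuousOn
      hv.bounded (ht.1.trans ht.2) hε hlam
    obtain rfl : t₀ = 0 := hv.eq_zero_of_isMaxOn_sub_parabolicBarrier hν hε le_rfl ht₀ hmax
    have hle : v t x - parabolicBarrier ε lam t x ≤ v 0 x₀ - parabolicBarrier ε lam 0 x₀ :=
      hmax (a := (t, x)) ⟨ht, mem_univ x⟩
    have hB0 := mul_one_add_norm_sq_le_parabolicBarrier hε.le hlam le_rfl x₀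
    have : 0 ≤ ε * (1 + ‖x₀‖ ^ 2) := by positivity
    linarith [h0 x₀]
  have hlim : Tendsto (fun ε => M + parabolicBarrier ε lam t x) (𝓝[>] 0) (𝓝 M) := by
    have : Continuous fun ε => M + parabolicBarrier ε lam t x := by
      unfold parabolicBarrier; fun_prop
    simpa [parabolicBarrier] using (this.continuousWithinAt (s := Ioi 0) (x := 0)).tendsto
  exact ge_of_tendsto hlim (eventually_nhdsWithin_of_forall hbarrier)

theorem neg_of_eq (hv : IsBoundedSubsolution ν T C b v vt)
    (heq : ∀ t ∈ Icc (0 : ℝ) T, ∀ x,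
      vt t x = ν * ∑ j, pd j (pd j (v t)) x - ∑ j, b t x j * pd j (v t) x) :
    IsBoundedSubsolution ν T C b (fun t x => -v t x) (fun t x => -vt t x) where
  continuousOn := hv.continuousOn.neg
  hasDerivWithinAt x t ht := (hv.hasDerivWithinAt x t ht).neg
  contDiff t ht := (hv.contDiff t ht).neg
  bounded t ht x := (abs_neg (v t x)).trans_le (hv.bounded t ht x)
  drift_bounded := hv.drift_bounded
  time_deriv_le t ht x := by
    simp only [heq t ht x, pd_fun_neg, mul_neg, Finset.sum_neg_distrib]
    linarith

theorem abs_le_of_eq (hv : IsBoundedSubsolution ν T C b v vt) (hν : 0 ≤ ν)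
    (heq : ∀ t ∈ Icc (0 : ℝ) T, ∀ x,
      vt t x = ν * ∑ j, pd j (pd j (v t)) x - ∑ j, b t x j * pd j (v t) x)
    {M : ℝ} (h0 : ∀ x, |v 0 x| ≤ M) : ∀ t ∈ Icc (0 : ℝ) T, ∀ x, |v t x| ≤ M := by
  intro t ht x
  have hupper := hv.le_of_initial_le hν (fun x => (le_abs_self _).trans (h0 x)) t ht x
  have hlower :=
    (hv.neg_of_eq heq).le_of_initial_le hν (fun x => (neg_le_abs _).trans (h0 x)) t ht x
  exact abs_le.2 ⟨neg_le.1 hlower, hupper⟩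

end IsBoundedSubsolution

theorem burgers_maximum_principle_general
    (n : ℕ) (ν T : ℝ) (hν : 0 < ν)
    (u ut : ℝ → EuclideanSpace ℝ (Fin n) → Fin n → ℝ)
    (h : Fin n → EuclideanSpace ℝ (Fin n) → ℝ)
    -- regularity: components of class C^{1,2}_b on [0,T] × ℝⁿ
    (hco : ∀ i, ContinuousOn (fun p : ℝ × EuclideanSpace ℝ (Fin n) => u p.1 p.2 i)
      (Icc 0 T ×ˢ univ))
    (hdt : ∀ i x, ∀ t ∈ Icc (0:ℝ) T,
      HasDerivWithinAt (fun s => u s x i) (ut t x i) (Icc 0 T) t)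
    (hsp : ∀ i, ∀ t ∈ Icc (0:ℝ) T, ContDiff ℝ 2 (fun x => u t x i))
    -- boundedness of u, its time derivative and its spatial derivatives up to order two
    (hbd : ∃ C : ℝ, ∀ t ∈ Icc (0:ℝ) T, ∀ x i,
      |u t x i| ≤ C ∧ |ut t x i| ≤ C ∧
      (∀ j, |pd j (fun y => u t y i) x| ≤ C) ∧
      (∀ j k, |pd k (pd j (fun y => u t y i)) x| ≤ C))
    -- the Burgers equation
    (heq : ∀ t ∈ Icc (0:ℝ) T, ∀ x i,
      ut t x i = ν * (∑ j, pd j (pd j (fun y => u t y i)) x)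
        - ∑ j, u t x j * pd j (fun y => u t y i) x)
    -- initial data
    (hinit : ∀ x i, u 0 x i = h i x) :
    (⨆ j : Fin n, ⨆ t : Icc (0:ℝ) T, ⨆ x : EuclideanSpace ℝ (Fin n), |u ↑t x j|)
      ≤ ⨆ j : Fin n, ⨆ x : EuclideanSpace ℝ (Fin n), |h j x| := by
  obtain ⟨C, hC⟩ := hbd
  set M := ⨆ j : Fin n, ⨆ x : EuclideanSpace ℝ (Fin n), |h j x|
  have hM : 0 ≤ M := Real.iSup_nonneg fun j => Real.iSup_nonneg fun x => abs_nonneg _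
  refine Real.iSup_le (fun j => Real.iSup_le (fun ⟨t, ht⟩ => Real.iSup_le (fun x => ?_) hM) hM) hM
  have h0T : (0 : ℝ) ∈ Icc 0 T := left_mem_Icc.2 (ht.1.trans ht.2)
  have hinit_le : ∀ x, |u 0 x j| ≤ M := fun x => by
    have hbdd : BddAbove (range fun y => |h j y|) :=
      ⟨C, forall_mem_range.2 fun y => hinit y j ▸ (hC 0 h0T y j).1⟩
    rw [hinit]
    exact (le_ciSup hbdd x).trans
      (le_ciSup (f := fun j => ⨆ y, |h j y|) (finite_range _).bddAbove j)
  have hv : IsBoundedSubsolution ν T C u (fun t x => u t x j) (fun t x => ut t x j) :=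
    ⟨hco j, hdt j, hsp j, fun t ht x => (hC t ht x j).1, fun t ht x k => (hC t ht x k).1,
      fun t ht x => (heq t ht x j).le⟩
  exact hv.abs_le_of_eq hν.le (fun t ht x => heq t ht x j) hinit_le t ht x

/-- a priori maximum estimate for bounded classical solutions of the
multivariate Burgers system on `[0,T] × ℝⁿ`:
`max_j sup_{[0,T]×ℝⁿ} |u_j| ≤ max_j sup_{ℝⁿ} |h_j|`. -/
theorem burgers_maximum_principle
    (n : ℕ) (hn : 1 ≤ n) (ν T : ℝ) (hν : 0 < ν) (hT : 0 < T)
    (u ut : ℝ → EuclideanSpace ℝ (Fin n) → Fin n → ℝ)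
    (h : Fin n → EuclideanSpace ℝ (Fin n) → ℝ)
    -- regularity: components of class C^{1,2}_b on [0,T] × ℝⁿ
    (hco : ∀ i, ContinuousOn (fun p : ℝ × EuclideanSpace ℝ (Fin n) => u p.1 p.2 i)
      (Icc 0 T ×ˢ univ))
    (hdt : ∀ i x, ∀ t ∈ Icc (0:ℝ) T,
      HasDerivWithinAt (fun s => u s x i) (ut t x i) (Icc 0 T) t)
    (hct : ∀ i, ContinuousOn (fun p : ℝ × EuclideanSpace ℝ (Fin n) => ut p.1 p.2 i)
      (Icc 0 T ×ˢ univ))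
    (hsp : ∀ i, ∀ t ∈ Icc (0:ℝ) T, ContDiff ℝ 2 (fun x => u t x i))
    (hc1 : ∀ i j, ContinuousOn
      (fun p : ℝ × EuclideanSpace ℝ (Fin n) => pd j (fun y => u p.1 y i) p.2)
      (Icc 0 T ×ˢ univ))
    (hc2 : ∀ i j k, ContinuousOn
      (fun p : ℝ × EuclideanSpace ℝ (Fin n) => pd k (pd j (fun y => u p.1 y i)) p.2)
      (Icc 0 T ×ˢ univ))
    -- boundedness of u, its time derivative and its spatial derivatives up to order two
    (hbd : ∃ C : ℝ, ∀ t ∈ Icc (0:ℝ) T, ∀ x i,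
      |u t x i| ≤ C ∧ |ut t x i| ≤ C ∧
      (∀ j, |pd j (fun y => u t y i) x| ≤ C) ∧
      (∀ j k, |pd k (pd j (fun y => u t y i)) x| ≤ C))
    -- the Burgers equation
    (heq : ∀ t ∈ Icc (0:ℝ) T, ∀ x i,
      ut t x i = ν * (∑ j, pd j (pd j (fun y => u t y i)) x)
        - ∑ j, u t x j * pd j (fun y => u t y i) x)
    -- initial data
    (hinit : ∀ x i, u 0 x i = h i x) :
    (⨆ j : Fin n, ⨆ t : Icc (0:ℝ) T, ⨆ x : EuclideanSpace ℝ (Fin n), |u ↑t x j|)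
      ≤ ⨆ j : Fin n, ⨆ x : EuclideanSpace ℝ (Fin n), |h j x| :=
  burgers_maximum_principle_general n ν T hν u ut h hco hdt hsp hbd heq hinit
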